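/- arXiv:2103.07145 — 5 statements merged into one kernel-verified Lean document; each statement's English description precedes it below -/
import Mathlib

section
/- Let x ∈ ℝ^N be block k-sparse with block support S, and let h ∈ ℝ^N satisfy ‖x+h‖_{2,1}·‖x‖_{2,q} ≤ ‖x‖_{2,1}·‖x+h‖_{2,q} for some q ∈ (1,∞). Then ‖h_{S^c}‖_{2,1} ≤ ‖h_S‖_{2,1} + (‖x‖_{2,1}/‖x‖_{2,q})·‖h‖_{2,q}, and consequently ‖h‖_{2,1} ≤ 3 k^{1−1/q} ‖h‖_{2,q}. -/
noncomputable section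

/-- The mixed ℓ2/ℓ1 norm of a block-partitioned vector. -/
def norm21 {M d : ℕ} (z : Fin M → EuclideanSpace ℝ (Fin d)) : ℝ := ∑ j, ‖z j‖

/-- The mixed ℓ2/ℓq norm of a block-partitioned vector. -/
def norm2q {M d : ℕ} (q : ℝ) (z : Fin M → EuclideanSpace ℝ (Fin d)) : ℝ :=
  (∑ j, ‖z j‖ ^ q) ^ (1 / q)

/-- The mixed ℓ2/ℓ∞ norm of a block-partitioned vector. -/
def norm2inf {M d : ℕ} (z : Fin M → EuclideanSpace ℝ (Fin d)) : ℝ := ⨆ j, ‖z j‖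

/-- The block q-ratio sparsity. -/
def kqs {M d : ℕ} (q : ℝ) (z : Fin M → EuclideanSpace ℝ (Fin d)) : ℝ :=
  (norm21 z / norm2q q z) ^ (q / (q - 1))

/-- The block support of a block-partitioned vector. -/
def blockSupport {M d : ℕ} (z : Fin M → EuclideanSpace ℝ (Fin d)) : Finset (Fin M) :=
  letI := Classical.decPred fun j : Fin M => z j ≠ 0
  Finset.univ.filter fun j => z j ≠ 0

/-- Restriction of a block-partitioned vector to a set of blocks. -/
def restrictS {M d : ℕ} (S : Finset (Fin M)) (z : Fin M → EuclideanSpace ℝ (Fin d)) :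
    Fin M → EuclideanSpace ℝ (Fin d) := fun j => if j ∈ S then z j else 0

/-- Matrix action on a block-partitioned vector. -/
def mulB {m M d : ℕ} (A : Matrix (Fin m) (Fin M × Fin d) ℝ)
    (x : Fin M → EuclideanSpace ℝ (Fin d)) : EuclideanSpace ℝ (Fin m) :=
  WithLp.toLp 2 fun i => ∑ p : Fin M × Fin d, A i p * x p.1 p.2

/-- Transpose matrix action, producing a block-partitioned vector. -/
def mulBt {m M d : ℕ} (A : Matrix (Fin m) (Fin M × Fin d) ℝ)
    (w : EuclideanSpace ℝ (Fin m)) : Fin M → EuclideanSpace ℝ (Fin d) :=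
  fun j => WithLp.toLp 2 fun l => ∑ i, A i (j, l) * w i

/-- The q-ratio block constrained minimal singular value (BCMSV). -/
def bcmsv {m M d : ℕ} (q s : ℝ) (A : Matrix (Fin m) (Fin M × Fin d) ℝ) : ℝ :=
  sInf {t : ℝ | ∃ z : Fin M → EuclideanSpace ℝ (Fin d),
    z ≠ 0 ∧ kqs q z ≤ s ∧ t = ‖mulB A z‖ / norm2q q z}

end

open Finset

private lemma helper_holder {M : ℕ} {q : ℝ} (hq : 1 < q) (T : Finset (Fin M))
    (f : Fin M → ℝ) (hf : ∀ j, 0 ≤ f j) :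
    ∑ j ∈ T, f j ≤ (T.card : ℝ) ^ (1 - 1/q) * (∑ j ∈ T, f j ^ q) ^ (1/q) := by
  have hq0 : (0:ℝ) < q := lt_trans one_pos hq
  have hpq : Real.HolderConjugate (q/(q-1)) q :=
    (Real.HolderConjugate.conjExponent hq).symm
  have H := Real.inner_le_Lp_mul_Lq T (fun _ => (1:ℝ)) f hpq
  simp only [one_mul, abs_one, Real.one_rpow, Finset.sum_const, nsmul_eq_mul, mul_one] at H
  calc ∑ j ∈ T, f j ≤ _ := H
    _ = (T.card : ℝ) ^ (1 - 1/q) * (∑ j ∈ T, f j ^ q) ^ (1/q) := by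
        congr 1
        · congr 1
          field_simp
        · congr 1
          exact Finset.sum_congr rfl fun j _ => by rw [abs_of_nonneg (hf j)]


/-- the cone constraint implied by minimality. -/
theorem cone_constraint_of_minimality {M d k : ℕ} (q : ℝ) (hq : 1 < q)
    (S : Finset (Fin M)) (hS : S.card ≤ k)
    (x h : Fin M → EuclideanSpace ℝ (Fin d)) (hx : x ≠ 0)
    (hxsupp : ∀ j ∉ S, x j = 0)
    (hineq : norm21 (x + h) * norm2q q x ≤ norm21 x * norm2q q (x + h)) :
    norm21 (restrictS Sᶜ h) ≤ norm21 (restrictS S h)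
        + (norm21 x / norm2q q x) * norm2q q h ∧
      norm21 h ≤ 3 * (k : ℝ) ^ (1 - 1 / q) * norm2q q h := by
  classical
  have hq0 : (0:ℝ) < q := lt_trans one_pos hq
  have hq1 : (1:ℝ) ≤ q := le_of_lt hq
  have he : (0:ℝ) ≤ 1 - 1/q := by
    have : 1/q < 1 := by rw [div_lt_one hq0]; exact hq
    linarith
  -- positivity of norm2q x
  obtain ⟨j0, hj0⟩ : ∃ j, x j ≠ 0 := by
    by_contra hcon; push_neg at hcon; exact hx (funext hcon)
  have hbpos : 0 < norm2q q x := by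
    have hsum : 0 < ∑ j, ‖x j‖ ^ q :=
      Finset.sum_pos' (fun j _ => Real.rpow_nonneg (norm_nonneg _) q)
        ⟨j0, Finset.mem_univ _, Real.rpow_pos_of_pos (norm_pos_iff.mpr hj0) q⟩
    exact Real.rpow_pos_of_pos hsum _
  have hnq_nonneg : ∀ z : Fin M → EuclideanSpace ℝ (Fin d), 0 ≤ norm2q q z := fun z =>
    Real.rpow_nonneg (Finset.sum_nonneg fun j _ => Real.rpow_nonneg (norm_nonneg _) q) _
  have ha_nonneg : 0 ≤ norm21 x := Finset.sum_nonneg fun j _ => norm_nonneg _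
  -- restriction sums
  have hres : ∀ T : Finset (Fin M), norm21 (restrictS T h) = ∑ j ∈ T, ‖h j‖ := by
    intro T
    simp only [norm21, restrictS, apply_ite (‖·‖), norm_zero]
    rw [Finset.sum_ite_mem, Finset.univ_inter]
  -- Minkowski
  have hmink : norm2q q (x + h) ≤ norm2q q x + norm2q q h := by
    have h1 : ∑ j, ‖(x+h) j‖ ^ q ≤ ∑ j, |‖x j‖ + ‖h j‖| ^ q :=
      Finset.sum_le_sum fun j _ => by
        rw [abs_of_nonneg (by positivity)]
        exact Real.rpow_le_rpow (norm_nonneg _) (norm_add_le _ _) (le_of_lt hq0)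
    have h2 := Real.Lp_add_le Finset.univ (fun j => ‖x j‖) (fun j => ‖h j‖) hq1
    have h3 : (∑ j, ‖(x+h) j‖ ^ q) ^ (1/q) ≤ (∑ j, |‖x j‖ + ‖h j‖| ^ q) ^ (1/q) :=
      Real.rpow_le_rpow
        (Finset.sum_nonneg fun j _ => Real.rpow_nonneg (norm_nonneg _) _) h1 (by positivity)
    have habs : ∀ z : Fin M → EuclideanSpace ℝ (Fin d),
        (∑ j, |‖z j‖| ^ q) ^ (1/q) = norm2q q z := by
      intro z; unfold norm2q; congr 1
      exact Finset.sum_congr rfl fun j _ => by rw [abs_of_nonneg (norm_nonneg _)]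
    calc norm2q q (x + h) = (∑ j, ‖(x+h) j‖ ^ q) ^ (1/q) := rfl
      _ ≤ (∑ j, |‖x j‖ + ‖h j‖| ^ q) ^ (1/q) := h3
      _ ≤ (∑ j, |‖x j‖| ^ q) ^ (1/q) + (∑ j, |‖h j‖| ^ q) ^ (1/q) := h2
      _ = norm2q q x + norm2q q h := by rw [habs, habs]
  -- norm21 x is supported on S
  have hax : norm21 x = ∑ j ∈ S, ‖x j‖ := by
    unfold norm21
    rw [← Finset.sum_add_sum_compl S]
    have : ∑ j ∈ Sᶜ, ‖x j‖ = 0 :=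
      Finset.sum_eq_zero fun j hj => by
        rw [hxsupp j (Finset.mem_compl.mp hj), norm_zero]
    rw [this, add_zero]
  -- lower bound
  have hlow : norm21 x - (∑ j ∈ S, ‖h j‖) + (∑ j ∈ Sᶜ, ‖h j‖) ≤ norm21 (x + h) := by
    have hsplit : norm21 (x+h) = ∑ j ∈ S, ‖x j + h j‖ + ∑ j ∈ Sᶜ, ‖x j + h j‖ := by
      unfold norm21
      simp only [Pi.add_apply]
      rw [Finset.sum_add_sum_compl]
    have hc : ∑ j ∈ Sᶜ, ‖x j + h j‖ = ∑ j ∈ Sᶜ, ‖h j‖ :=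
      Finset.sum_congr rfl fun j hj => by
        rw [hxsupp j (Finset.mem_compl.mp hj), zero_add]
    have hm : ∑ j ∈ S, (‖x j‖ - ‖h j‖) ≤ ∑ j ∈ S, ‖x j + h j‖ :=
      Finset.sum_le_sum fun j _ => by
        have := norm_add_le (x j + h j) (-(h j))
        simp only [add_neg_cancel_right, norm_neg] at this
        linarith
    rw [hsplit, hc, hax, ← Finset.sum_sub_distrib]
    linarith
  -- upper bound
  have hup : norm21 (x + h) ≤ norm21 x + (norm21 x / norm2q q x) * norm2q q h := by
    have h1 : norm21 (x+h) * norm2q q x ≤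
        norm21 x * (norm2q q x + norm2q q h) :=
      le_trans hineq (mul_le_mul_of_nonneg_left hmink ha_nonneg)
    rw [← le_div_iff₀ hbpos] at h1
    calc norm21 (x+h) ≤ norm21 x * (norm2q q x + norm2q q h) / norm2q q x := h1
      _ = norm21 x + (norm21 x / norm2q q x) * norm2q q h := by
          field_simp
  -- Part 1
  have part1 : norm21 (restrictS Sᶜ h) ≤ norm21 (restrictS S h)
      + (norm21 x / norm2q q x) * norm2q q h := by
    rw [hres, hres]; linarith
  refine ⟨part1, ?_⟩
  -- norm2q of restriction to S is ≤ norm2q of full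
  have hsub : ∀ z : Fin M → EuclideanSpace ℝ (Fin d),
      (∑ j ∈ S, ‖z j‖ ^ q) ^ (1/q) ≤ norm2q q z := by
    intro z
    apply Real.rpow_le_rpow
      (Finset.sum_nonneg fun j _ => Real.rpow_nonneg (norm_nonneg _) _)
      (Finset.sum_le_sum_of_subset_of_nonneg (Finset.subset_univ S)
        (fun j _ _ => Real.rpow_nonneg (norm_nonneg _) _))
      (by positivity)
  have hcard : (S.card : ℝ) ^ (1 - 1/q) ≤ (k : ℝ) ^ (1 - 1/q) :=
    Real.rpow_le_rpow (Nat.cast_nonneg _) (Nat.cast_le.mpr hS) he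
  have hke0 : (0:ℝ) ≤ (k : ℝ) ^ (1 - 1/q) := Real.rpow_nonneg (Nat.cast_nonneg _) _
  -- bound on ∑_S ‖h j‖
  have hhS : ∑ j ∈ S, ‖h j‖ ≤ (k : ℝ) ^ (1 - 1/q) * norm2q q h := by
    calc ∑ j ∈ S, ‖h j‖
        ≤ (S.card : ℝ) ^ (1 - 1/q) * (∑ j ∈ S, ‖h j‖ ^ q) ^ (1/q) :=
          helper_holder hq S _ fun j => norm_nonneg _
      _ ≤ (k : ℝ) ^ (1 - 1/q) * norm2q q h :=
          mul_le_mul hcard (hsub h)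
            (Real.rpow_nonneg (Finset.sum_nonneg fun j _ =>
              Real.rpow_nonneg (norm_nonneg _) _) _) hke0
  -- bound on the ratio
  have hratio : norm21 x / norm2q q x ≤ (k : ℝ) ^ (1 - 1/q) := by
    rw [div_le_iff₀ hbpos, hax]
    calc ∑ j ∈ S, ‖x j‖
        ≤ (S.card : ℝ) ^ (1 - 1/q) * (∑ j ∈ S, ‖x j‖ ^ q) ^ (1/q) :=
          helper_holder hq S _ fun j => norm_nonneg _
      _ ≤ (k : ℝ) ^ (1 - 1/q) * norm2q q x :=
          mul_le_mul hcard (hsub x)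
            (Real.rpow_nonneg (Finset.sum_nonneg fun j _ =>
              Real.rpow_nonneg (norm_nonneg _) _) _) hke0
  have hsplit : norm21 h = ∑ j ∈ S, ‖h j‖ + ∑ j ∈ Sᶜ, ‖h j‖ := by
    unfold norm21; rw [Finset.sum_add_sum_compl]
  have hrmul : (norm21 x / norm2q q x) * norm2q q h ≤
      (k : ℝ) ^ (1 - 1/q) * norm2q q h :=
    mul_le_mul_of_nonneg_right hratio (hnq_nonneg h)
  rw [hres, hres] at part1
  rw [hsplit]
  linarith
end

section
/- Fix q ∈ (1,∞), block sparsity level k, and a matrix A with q-ratio block constrained minimal singular value β = β_{q,3^{q/(q-1)}k}(A) > 0. Let x be block k-sparse, y = Ax + ε with ‖ε‖_2 ≤ η, and let x̂ minimize ‖z‖_{2,1}/‖z‖_{2,q} subject to ‖y − Az‖_2 ≤ η. Then ‖x̂ − x‖_{2,q} ≤ 2η/β and ‖x̂ − x‖_{2,1} ≤ 6 k^{1−1/q} η/β. -/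
/-- stable recovery of a block k-sparse signal under ℓ2-bounded noise. -/
theorem recovery_error_bound_l2_noise {m M d k : ℕ}
    (A : Matrix (Fin m) (Fin M × Fin d) ℝ) (q : ℝ) (hq : 1 < q)
    (hbeta : 0 < bcmsv q ((3 : ℝ) ^ (q / (q - 1)) * (k : ℝ)) A)
    (x : Fin M → EuclideanSpace ℝ (Fin d)) (hx : x ≠ 0)
    (hxs : (blockSupport x).card ≤ k)
    (ε : EuclideanSpace ℝ (Fin m)) (η : ℝ) (hε : ‖ε‖ ≤ η)
    (y : EuclideanSpace ℝ (Fin m)) (hy : y = mulB A x + ε)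
    (xhat : Fin M → EuclideanSpace ℝ (Fin d))
    (hfeas : ‖y - mulB A xhat‖ ≤ η)
    (hmin : ∀ z : Fin M → EuclideanSpace ℝ (Fin d), ‖y - mulB A z‖ ≤ η →
      norm21 xhat / norm2q q xhat ≤ norm21 z / norm2q q z) :
    norm2q q (xhat - x) ≤ 2 * η / bcmsv q ((3 : ℝ) ^ (q / (q - 1)) * (k : ℝ)) A ∧
      norm21 (xhat - x) ≤
        6 * (k : ℝ) ^ (1 - 1 / q) * η / bcmsv q ((3 : ℝ) ^ (q / (q - 1)) * (k : ℝ)) A := by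
  classical
  set B := bcmsv q ((3 : ℝ) ^ (q / (q - 1)) * (k : ℝ)) A with hB
  set h : Fin M → EuclideanSpace ℝ (Fin d) := xhat - x with hh
  set S : Finset (Fin M) := blockSupport x with hS
  have hq0 : (0 : ℝ) < q := lt_trans one_pos hq
  have hqne : q ≠ 0 := ne_of_gt hq0
  have hq1 : (0 : ℝ) < q - 1 := by linarith
  have hexp0 : (0 : ℝ) ≤ 1 - 1 / q := by
    have : 1 / q < 1 := by
      rw [div_lt_one hq0]; exact hq
    linarith
  have hη : (0 : ℝ) ≤ η := le_trans (norm_nonneg ε) hε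
  set c : ℝ := (k : ℝ) ^ (1 - 1 / q) with hc
  have hc0 : 0 ≤ c := Real.rpow_nonneg (Nat.cast_nonneg k) _
  -- basic facts about norms
  have n1_nonneg : ∀ z : Fin M → EuclideanSpace ℝ (Fin d), 0 ≤ norm21 z := fun z =>
    Finset.sum_nonneg fun j _ => norm_nonneg _
  have sumq_nonneg : ∀ z : Fin M → EuclideanSpace ℝ (Fin d),
      (0 : ℝ) ≤ ∑ j, ‖z j‖ ^ q := fun z =>
    Finset.sum_nonneg fun j _ => Real.rpow_nonneg (norm_nonneg _) q
  have nq_nonneg : ∀ z : Fin M → EuclideanSpace ℝ (Fin d), 0 ≤ norm2q q z := fun z =>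
    Real.rpow_nonneg (sumq_nonneg z) _
  have nq_pos : ∀ z : Fin M → EuclideanSpace ℝ (Fin d), z ≠ 0 → 0 < norm2q q z := by
    intro z hz
    obtain ⟨j, hj⟩ : ∃ j, z j ≠ 0 := by
      by_contra hcon; push_neg at hcon; exact hz (funext hcon)
    have h1 : (0 : ℝ) < ‖z j‖ ^ q := Real.rpow_pos_of_pos (norm_pos_iff.mpr hj) q
    have h2 : (0 : ℝ) < ∑ j, ‖z j‖ ^ q :=
      lt_of_lt_of_le h1 (Finset.single_le_sum
        (fun i _ => Real.rpow_nonneg (norm_nonneg _) q) (Finset.mem_univ j))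
    exact Real.rpow_pos_of_pos h2 _
  have hmemS : ∀ j, j ∈ S ↔ x j ≠ 0 := by
    intro j; simp [hS, blockSupport]
  have hxq : 0 < norm2q q x := nq_pos x hx
  -- splitting the ℓ2/ℓ1 norm over S and its complement
  have split : ∀ z : Fin M → EuclideanSpace ℝ (Fin d),
      norm21 z = (∑ j ∈ S, ‖z j‖) + ∑ j ∈ Sᶜ, ‖z j‖ :=
    fun z => (Finset.sum_add_sum_compl S _).symm
  have hn1x : norm21 x = ∑ j ∈ S, ‖x j‖ := by
    rw [split x]
    have : ∑ j ∈ Sᶜ, ‖x j‖ = 0 := by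
      apply Finset.sum_eq_zero
      intro j hj
      have : x j = 0 := by
        by_contra hcon
        exact (Finset.mem_compl.mp hj) ((hmemS j).mpr hcon)
      simp [this]
    rw [this, add_zero]
  -- Hölder: sum over a finset of ≤ k blocks
  have holder : ∀ (S' : Finset (Fin M)) (z : Fin M → EuclideanSpace ℝ (Fin d)),
      (∑ j ∈ S', ‖z j‖) ≤ (S'.card : ℝ) ^ (1 - 1 / q) * norm2q q z := by
    intro S' z
    have h1 := Real.inner_le_weight_mul_Lp_of_nonneg S' hq.le (fun _ => (1 : ℝ))
      (fun j => ‖z j‖) (fun _ => zero_le_one) (fun j => norm_nonneg _)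
    simp only [one_mul, Finset.sum_const, nsmul_eq_mul, mul_one] at h1
    have h2 : (∑ j ∈ S', ‖z j‖ ^ q) ^ q⁻¹ ≤ norm2q q z := by
      rw [norm2q, one_div]
      apply Real.rpow_le_rpow
      · exact Finset.sum_nonneg fun j _ => Real.rpow_nonneg (norm_nonneg _) q
      · exact Finset.sum_le_sum_of_subset_of_nonneg (Finset.subset_univ S')
          fun j _ _ => Real.rpow_nonneg (norm_nonneg _) q
      · positivity
    calc (∑ j ∈ S', ‖z j‖) ≤ (S'.card : ℝ) ^ (1 - q⁻¹) * (∑ j ∈ S', ‖z j‖ ^ q) ^ q⁻¹ := h1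
      _ ≤ (S'.card : ℝ) ^ (1 - 1 / q) * norm2q q z := by
          rw [one_div]
          exact mul_le_mul_of_nonneg_left h2 (Real.rpow_nonneg (Nat.cast_nonneg _) _)
  have hcard : ((S.card : ℝ)) ^ (1 - 1 / q) ≤ c := by
    rw [hc]
    exact Real.rpow_le_rpow (Nat.cast_nonneg _) (Nat.cast_le.mpr hxs) hexp0
  have holderS : ∀ z : Fin M → EuclideanSpace ℝ (Fin d),
      (∑ j ∈ S, ‖z j‖) ≤ c * norm2q q z := by
    intro z
    calc (∑ j ∈ S, ‖z j‖) ≤ (S.card : ℝ) ^ (1 - 1 / q) * norm2q q z := holder S z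
      _ ≤ c * norm2q q z := mul_le_mul_of_nonneg_right hcard (nq_nonneg z)
  -- the ratio r
  set r : ℝ := norm21 x / norm2q q x with hr
  have hr0 : 0 ≤ r := div_nonneg (n1_nonneg x) (nq_nonneg x)
  have hrc : r ≤ c := by
    rw [hr, div_le_iff₀ hxq]
    calc norm21 x = ∑ j ∈ S, ‖x j‖ := hn1x
      _ ≤ c * norm2q q x := holderS x
  have hrx : r * norm2q q x = norm21 x := by
    rw [hr]; field_simp
  -- x is feasible
  have hfx : ‖y - mulB A x‖ ≤ η := by
    rw [hy]
    simpa using hε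
  -- minimality gives the ratio bound for xhat
  have hxhat_bound : norm21 xhat ≤ r * norm2q q xhat := by
    by_cases hz : xhat = 0
    · have h1 : norm21 xhat = 0 := by simp [hz, norm21]
      have h2 : norm2q q xhat = 0 := by
        simp [hz, norm2q, Real.zero_rpow hqne, Real.zero_rpow (inv_ne_zero hqne)]
      rw [h1, h2, mul_zero]
    · have hpos := nq_pos xhat hz
      exact (div_le_iff₀ hpos).mp (hmin x hfx)
  -- triangle inequality for norm2q
  have nq_tri : norm2q q xhat ≤ norm2q q x + norm2q q h := by
    have key1 : (∑ j, ‖xhat j‖ ^ q) ^ (1 / q) ≤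
        (∑ j, |‖x j‖ + ‖h j‖| ^ q) ^ (1 / q) := by
      apply Real.rpow_le_rpow (sumq_nonneg xhat)
      · apply Finset.sum_le_sum
        intro j _
        apply Real.rpow_le_rpow (norm_nonneg _) _ hq0.le
        have hxj : xhat j = x j + h j := by simp [hh]
        calc ‖xhat j‖ = ‖x j + h j‖ := by rw [hxj]
          _ ≤ ‖x j‖ + ‖h j‖ := norm_add_le _ _
          _ ≤ |‖x j‖ + ‖h j‖| := le_abs_self _
      · positivity
    have key2 := Real.Lp_add_le Finset.univ (fun j => ‖x j‖) (fun j => ‖h j‖) hq.le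
    simp only [abs_norm] at key2
    rw [norm2q, norm2q, norm2q]
    exact le_trans key1 key2
  -- off-support, h agrees with xhat
  have hoff : ∑ j ∈ Sᶜ, ‖h j‖ = ∑ j ∈ Sᶜ, ‖xhat j‖ := by
    apply Finset.sum_congr rfl
    intro j hj
    have hxj : x j = 0 := by
      by_contra hcon
      exact (Finset.mem_compl.mp hj) ((hmemS j).mpr hcon)
    simp [hh, hxj]
  -- the key cone inequality
  have key : norm21 h ≤ 3 * c * norm2q q h := by
    have e1 : (∑ j ∈ S, ‖h j‖) ≤ c * norm2q q h := holderS h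
    have e3 : norm21 xhat ≤ norm21 x + r * norm2q q h := by
      calc norm21 xhat ≤ r * norm2q q xhat := hxhat_bound
        _ ≤ r * (norm2q q x + norm2q q h) := mul_le_mul_of_nonneg_left nq_tri hr0
        _ = r * norm2q q x + r * norm2q q h := mul_add _ _ _
        _ = norm21 x + r * norm2q q h := by rw [hrx]
    have e4 : norm21 x ≤ (∑ j ∈ S, ‖xhat j‖) + ∑ j ∈ S, ‖h j‖ := by
      rw [hn1x, ← Finset.sum_add_distrib]
      apply Finset.sum_le_sum
      intro j _
      have hxj : x j = xhat j - h j := by simp [hh]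
      calc ‖x j‖ = ‖xhat j - h j‖ := by rw [← hxj]
        _ ≤ ‖xhat j‖ + ‖h j‖ := norm_sub_le _ _
    have e2 : (∑ j ∈ S, ‖xhat j‖) + ∑ j ∈ Sᶜ, ‖xhat j‖ = norm21 xhat := (split xhat).symm
    have e5 : ∑ j ∈ Sᶜ, ‖h j‖ ≤ (∑ j ∈ S, ‖h j‖) + r * norm2q q h := by
      rw [hoff]; linarith
    have e6 : r * norm2q q h ≤ c * norm2q q h :=
      mul_le_mul_of_nonneg_right hrc (nq_nonneg h)
    rw [split h]
    linarith
  by_cases hne : h = 0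
  · have h0 : norm2q q h = 0 := by simp [hne, norm2q, Real.zero_rpow hqne, Real.zero_rpow (inv_ne_zero hqne)]
    have h1 : norm21 h = 0 := by simp [hne, norm21]
    constructor
    · rw [h0]; positivity
    · rw [h1]; positivity
  · have hnq : 0 < norm2q q h := nq_pos h hne
    -- kqs bound
    have hkq : kqs q h ≤ (3 : ℝ) ^ (q / (q - 1)) * (k : ℝ) := by
      rw [kqs]
      have hb : norm21 h / norm2q q h ≤ 3 * c := (div_le_iff₀ hnq).mpr key
      have hstep := Real.rpow_le_rpow
        (div_nonneg (n1_nonneg h) hnq.le) hb (by positivity : (0:ℝ) ≤ q / (q - 1))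
      refine hstep.trans_eq ?_
      rw [Real.mul_rpow (by norm_num : (0:ℝ) ≤ 3) hc0, hc,
        ← Real.rpow_mul (Nat.cast_nonneg k)]
      have hone : (1 - 1 / q) * (q / (q - 1)) = 1 := by
        field_simp
      rw [hone, Real.rpow_one]
    -- bcmsv is a lower bound
    have hbdd : BddBelow {t : ℝ | ∃ z : Fin M → EuclideanSpace ℝ (Fin d),
        z ≠ 0 ∧ kqs q z ≤ (3 : ℝ) ^ (q / (q - 1)) * (k : ℝ) ∧
          t = ‖mulB A z‖ / norm2q q z} := by
      refine ⟨0, fun t ht => ?_⟩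
      obtain ⟨z, _, _, rfl⟩ := ht
      exact div_nonneg (norm_nonneg _) (nq_nonneg z)
    have hmem : (‖mulB A h‖ / norm2q q h) ∈ {t : ℝ | ∃ z : Fin M → EuclideanSpace ℝ (Fin d),
        z ≠ 0 ∧ kqs q z ≤ (3 : ℝ) ^ (q / (q - 1)) * (k : ℝ) ∧
          t = ‖mulB A z‖ / norm2q q z} := ⟨h, hne, hkq, rfl⟩
    have hle : B ≤ ‖mulB A h‖ / norm2q q h := csInf_le hbdd hmem
    -- ‖A h‖ ≤ 2η
    have hABlin : mulB A h = mulB A xhat - mulB A x := by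
      ext i
      have happ : (mulB A xhat - mulB A x) i = mulB A xhat i - mulB A x i := rfl
      rw [happ]
      simp only [mulB, hh, Pi.sub_apply, PiLp.sub_apply, mul_sub,
        Finset.sum_sub_distrib]
    have hAh : ‖mulB A h‖ ≤ 2 * η := by
      have e : mulB A h = (y - mulB A x) - (y - mulB A xhat) := by
        rw [hABlin]; abel
      rw [e]
      calc ‖(y - mulB A x) - (y - mulB A xhat)‖
          ≤ ‖y - mulB A x‖ + ‖y - mulB A xhat‖ := norm_sub_le _ _
        _ ≤ 2 * η := by linarith
    have h1 : norm2q q h ≤ 2 * η / B := by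
      rw [le_div_iff₀ hbeta]
      have h2 : B * norm2q q h ≤ ‖mulB A h‖ := (le_div_iff₀ hnq).mp hle
      linarith
    refine ⟨h1, ?_⟩
    calc norm21 h ≤ 3 * c * norm2q q h := key
      _ ≤ 3 * c * (2 * η / B) := by
          apply mul_le_mul_of_nonneg_left h1 (by positivity)
      _ = 6 * c * η / B := by ring
end

section
/- Fix q ∈ (1,∞), k, and A with β = β_{q,3^{q/(q-1)}k}(A) > 0. Let x be block k-sparse, y = Ax + ε with ‖Aᵀε‖_{2,∞} ≤ μ, and let x̂ minimize ‖z‖_{2,1}/‖z‖_{2,q} subject to ‖Aᵀ(y − Az)‖_{2,∞} ≤ μ. Then ‖x̂ − x‖_{2,q} ≤ 6 k^{1−1/q} μ/β² and ‖x̂ − x‖_{2,1} ≤ 18 k^{2−2/q} μ/β². -/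
open Finset Real

section Aux

variable {m M d : ℕ}

lemma norm21_nonneg (z : Fin M → EuclideanSpace ℝ (Fin d)) : 0 ≤ norm21 z :=
  Finset.sum_nonneg fun _ _ => norm_nonneg _

lemma norm2q_nonneg (q : ℝ) (z : Fin M → EuclideanSpace ℝ (Fin d)) : 0 ≤ norm2q q z :=
  Real.rpow_nonneg (Finset.sum_nonneg fun _ _ => Real.rpow_nonneg (norm_nonneg _) _) _

lemma norm2q_pos {q : ℝ} (hq : 0 < q) {z : Fin M → EuclideanSpace ℝ (Fin d)} (hz : z ≠ 0) :
    0 < norm2q q z := by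
  obtain ⟨j, hj⟩ : ∃ j, z j ≠ 0 := by
    by_contra hcon; push_neg at hcon; exact hz (funext hcon)
  apply Real.rpow_pos_of_pos
  refine Finset.sum_pos' (fun i _ => Real.rpow_nonneg (norm_nonneg _) _)
    ⟨j, Finset.mem_univ j, Real.rpow_pos_of_pos (norm_pos_iff.2 hj) _⟩

lemma mem_blockSupport {z : Fin M → EuclideanSpace ℝ (Fin d)} {j : Fin M} :
    j ∈ blockSupport z ↔ z j ≠ 0 := by
  classical
  simp [blockSupport]

/-- Hölder: sum over a finset against constant 1. -/
lemma holder_card {q : ℝ} (hq : 1 < q) (S : Finset (Fin M)) (f : Fin M → ℝ)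
    (hf : ∀ j, 0 ≤ f j) :
    ∑ j ∈ S, f j ≤ (S.card : ℝ) ^ (1 - 1 / q) * (∑ j ∈ S, f j ^ q) ^ (1 / q) := by
  have hq0 : q ≠ 0 := by positivity
  have hq1 : q - 1 ≠ 0 := by nlinarith
  have hpq : (Real.conjExponent q).HolderConjugate q :=
    (Real.HolderConjugate.conjExponent hq).symm
  have h := Real.inner_le_Lp_mul_Lq_of_nonneg (s := S) (f := fun _ => (1 : ℝ)) (g := f) hpq
    (fun i _ => zero_le_one) (fun i _ => hf i)
  simp only [one_mul, Real.one_rpow, Finset.sum_const, nsmul_eq_mul, mul_one] at h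
  have he : 1 / Real.conjExponent q = 1 - 1 / q := by
    rw [Real.conjExponent, one_div_div]
    field_simp
  rwa [he] at h

lemma le_norm2inf (z : Fin M → EuclideanSpace ℝ (Fin d)) (j : Fin M) :
    ‖z j‖ ≤ norm2inf z := by
  rw [norm2inf]
  exact le_ciSup (f := fun i => ‖z i‖) (Set.Finite.bddAbove (Set.finite_range _)) j

lemma norm2q_zero_eq {q : ℝ} (hq : q ≠ 0) :
    norm2q (M := M) (d := d) q 0 = 0 := by
  have hz : ∑ j, ‖(0 : Fin M → EuclideanSpace ℝ (Fin d)) j‖ ^ q = 0 := by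
    simp [Real.zero_rpow hq]
  rw [norm2q, hz, Real.zero_rpow (one_div_ne_zero hq)]

end Aux

section Lin

variable {m M d : ℕ}

lemma mulB_sub (A : Matrix (Fin m) (Fin M × Fin d) ℝ) (u v : Fin M → EuclideanSpace ℝ (Fin d)) :
    mulB A (u - v) = mulB A u - mulB A v := by
  ext i
  simp only [mulB, WithLp.ofLp_toLp, PiLp.sub_apply, Pi.sub_apply, mul_sub, Finset.sum_sub_distrib]

lemma mulBt_sub (A : Matrix (Fin m) (Fin M × Fin d) ℝ) (u v : EuclideanSpace ℝ (Fin m)) :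
    mulBt A (u - v) = mulBt A u - mulBt A v := by
  funext j; ext l
  simp only [mulBt, WithLp.ofLp_toLp, PiLp.sub_apply, Pi.sub_apply, mul_sub, Finset.sum_sub_distrib]

lemma norm_mulB_sq (A : Matrix (Fin m) (Fin M × Fin d) ℝ)
    (z : Fin M → EuclideanSpace ℝ (Fin d)) :
    ‖mulB A z‖ ^ 2 = ∑ j, ∑ l, z j l * mulBt A (mulB A z) j l := by
  set w : EuclideanSpace ℝ (Fin m) := mulB A z with hw
  have h1 : ‖w‖ ^ 2 = ∑ i, w i * w i := by
    rw [EuclideanSpace.norm_eq, Real.sq_sqrt (Finset.sum_nonneg fun _ _ => sq_nonneg _)]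
    exact Finset.sum_congr rfl fun i _ => by
      rw [Real.norm_eq_abs, sq_abs, sq]
  rw [h1]
  have h2 : ∀ j l, z j l * mulBt A w j l = ∑ i, z j l * (A i (j, l) * w i) := by
    intro j l; rw [mulBt, WithLp.ofLp_toLp, Finset.mul_sum]
  calc ∑ i, w i * w i = ∑ i, (∑ p : Fin M × Fin d, A i p * z p.1 p.2) * w i := by
        exact Finset.sum_congr rfl fun i _ => by rw [hw]; simp only [mulB, WithLp.ofLp_toLp]
    _ = ∑ i, ∑ j, ∑ l, A i (j, l) * z j l * w i := by
        exact Finset.sum_congr rfl fun i _ => by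
          rw [Fintype.sum_prod_type, Finset.sum_mul]
          exact Finset.sum_congr rfl fun j _ => by rw [Finset.sum_mul]
    _ = ∑ j, ∑ l, ∑ i, A i (j, l) * z j l * w i := by
        rw [Finset.sum_comm]
        exact Finset.sum_congr rfl fun j _ => Finset.sum_comm
    _ = ∑ j, ∑ l, z j l * mulBt A w j l := by
        refine Finset.sum_congr rfl fun j _ => Finset.sum_congr rfl fun l _ => ?_
        rw [h2 j l]
        exact Finset.sum_congr rfl fun i _ => by ring

lemma inner_block (a b : EuclideanSpace ℝ (Fin d)) :
    ∑ l, a l * b l ≤ ‖a‖ * ‖b‖ := by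
  have : (inner ℝ a b : ℝ) = ∑ l, a l * b l := by
    simp [PiLp.inner_apply, RCLike.inner_apply, conj_trivial, mul_comm]
  rw [← this]
  exact real_inner_le_norm a b

end Lin


/-- stable recovery of a block k-sparse signal under ℓ_{2,∞}-bounded noise
(the block Dantzig-selector type constraint). -/
theorem recovery_error_bound_l2inf_noise {m M d k : ℕ}
    (A : Matrix (Fin m) (Fin M × Fin d) ℝ) (q : ℝ) (hq : 1 < q)
    (hbeta : 0 < bcmsv q ((3 : ℝ) ^ (q / (q - 1)) * (k : ℝ)) A)
    (x : Fin M → EuclideanSpace ℝ (Fin d)) (hx : x ≠ 0)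
    (hxs : (blockSupport x).card ≤ k)
    (ε : EuclideanSpace ℝ (Fin m)) (μ : ℝ) (hε : norm2inf (mulBt A ε) ≤ μ)
    (y : EuclideanSpace ℝ (Fin m)) (hy : y = mulB A x + ε)
    (xhat : Fin M → EuclideanSpace ℝ (Fin d))
    (hfeas : norm2inf (mulBt A (y - mulB A xhat)) ≤ μ)
    (hmin : ∀ z : Fin M → EuclideanSpace ℝ (Fin d),
      norm2inf (mulBt A (y - mulB A z)) ≤ μ →
      norm21 xhat / norm2q q xhat ≤ norm21 z / norm2q q z) :
    norm2q q (xhat - x) ≤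
        6 * (k : ℝ) ^ (1 - 1 / q) * μ / (bcmsv q ((3 : ℝ) ^ (q / (q - 1)) * (k : ℝ)) A) ^ 2 ∧
      norm21 (xhat - x) ≤
        18 * (k : ℝ) ^ (2 - 2 / q) * μ / (bcmsv q ((3 : ℝ) ^ (q / (q - 1)) * (k : ℝ)) A) ^ 2 := by
  classical
  set β := bcmsv q ((3 : ℝ) ^ (q / (q - 1)) * (k : ℝ)) A with hβ
  have hq0 : (0 : ℝ) < q := lt_trans one_pos hq
  have hq0' : q ≠ 0 := ne_of_gt hq0
  have hq1 : q - 1 ≠ 0 := by nlinarith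
  have hr : (0 : ℝ) ≤ 1 - 1 / q := by
    have : 1 / q < 1 := by rw [div_lt_one hq0]; exact hq
    linarith
  set r : ℝ := 1 - 1 / q with hrdef
  have hkr : (0 : ℝ) ≤ (k : ℝ) ^ r := Real.rpow_nonneg (Nat.cast_nonneg k) r
  obtain ⟨j0, hj0⟩ : ∃ j, x j ≠ 0 := by
    by_contra hcon; push_neg at hcon; exact hx (funext hcon)
  haveI : Nonempty (Fin M) := ⟨j0⟩
  set S : Finset (Fin M) := blockSupport x with hS
  have hxoff : ∀ j, j ∉ S → x j = 0 := fun j hj =>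
    not_not.1 fun hne => hj (mem_blockSupport.2 hne)
  have hj0S : j0 ∈ S := mem_blockSupport.2 hj0
  have hkpos : (0 : ℝ) < (k : ℝ) := by
    have h1 : 1 ≤ S.card := Finset.card_pos.2 ⟨j0, hj0S⟩
    have h2 : 1 ≤ k := le_trans h1 hxs
    exact_mod_cast Nat.lt_of_lt_of_le Nat.zero_lt_one h2
  have hcard : ((S.card : ℝ)) ^ r ≤ (k : ℝ) ^ r :=
    Real.rpow_le_rpow (Nat.cast_nonneg _) (Nat.cast_le.2 hxs) hr
  have hμ : 0 ≤ μ := by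
    refine le_trans ?_ hε
    exact le_trans (norm_nonneg (mulBt A ε j0)) (le_norm2inf _ j0)
  set h : Fin M → EuclideanSpace ℝ (Fin d) := xhat - x with hh
  have hxhat : ∀ j, xhat j = x j + h j := by
    intro j; simp [hh]
  have hhq0 : 0 ≤ norm2q q h := norm2q_nonneg q h
  -- x is feasible
  have hxfeas : norm2inf (mulBt A (y - mulB A x)) ≤ μ := by
    have hyx : y - mulB A x = ε := by rw [hy]; abel
    rwa [hyx]
  have hxq : 0 < norm2q q x := norm2q_pos hq0 hx
  -- norm21 x restricted to S
  have h21x : norm21 x = ∑ j ∈ S, ‖x j‖ :=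
    (Finset.sum_subset (Finset.subset_univ S) fun j _ hj => by
      rw [hxoff j hj, norm_zero]).symm
  have h2qx : ∑ j ∈ S, ‖x j‖ ^ q = ∑ j, ‖x j‖ ^ q :=
    Finset.sum_subset (Finset.subset_univ S) fun j _ hj => by
      rw [hxoff j hj, norm_zero, Real.zero_rpow hq0']
  -- α bound : ‖x‖₁ ≤ k^r ‖x‖_q
  have hα' : norm21 x ≤ (k : ℝ) ^ r * norm2q q x := by
    rw [h21x]
    calc ∑ j ∈ S, ‖x j‖ ≤ (S.card : ℝ) ^ r * (∑ j ∈ S, ‖x j‖ ^ q) ^ (1 / q) :=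
          holder_card hq S _ fun j => norm_nonneg _
      _ = (S.card : ℝ) ^ r * norm2q q x := by rw [h2qx, norm2q]
      _ ≤ (k : ℝ) ^ r * norm2q q x :=
          mul_le_mul_of_nonneg_right hcard (norm2q_nonneg q x)
  have hα : norm21 x / norm2q q x ≤ (k : ℝ) ^ r := by
    rw [div_le_iff₀ hxq]; exact hα'
  -- minimality: ‖x̂‖₁ ≤ α ‖x̂‖_q where α = ‖x‖₁/‖x‖_q
  have hminx : norm21 xhat ≤ (norm21 x / norm2q q x) * norm2q q xhat := by
    by_cases hzero : xhat = 0
    · have e1 : norm21 xhat = 0 := by simp [hzero, norm21]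
      have e2 : norm2q q xhat = 0 := by rw [hzero]; exact norm2q_zero_eq hq0'
      rw [e1, e2, mul_zero]
    · have := hmin x hxfeas
      rw [div_le_div_iff₀ (norm2q_pos hq0 hzero) hxq] at this
      rw [div_mul_eq_mul_div, le_div_iff₀ hxq]
      linarith [this]
  -- Hölder for h on S
  have hhS : ∑ j ∈ S, ‖h j‖ ≤ (k : ℝ) ^ r * norm2q q h := by
    calc ∑ j ∈ S, ‖h j‖ ≤ (S.card : ℝ) ^ r * (∑ j ∈ S, ‖h j‖ ^ q) ^ (1 / q) :=
          holder_card hq S _ fun j => norm_nonneg _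
      _ ≤ (S.card : ℝ) ^ r * norm2q q h := by
          refine mul_le_mul_of_nonneg_left ?_ (Real.rpow_nonneg (Nat.cast_nonneg _) r)
          refine Real.rpow_le_rpow (Finset.sum_nonneg fun j _ =>
            Real.rpow_nonneg (norm_nonneg _) q) ?_ (by positivity)
          exact Finset.sum_le_sum_of_subset_of_nonneg (Finset.subset_univ S)
            fun j _ _ => Real.rpow_nonneg (norm_nonneg _) q
      _ ≤ (k : ℝ) ^ r * norm2q q h := mul_le_mul_of_nonneg_right hcard hhq0
  -- Minkowski : ‖x̂‖_q ≤ ‖x‖_q + ‖h‖_q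
  have hmink : norm2q q xhat ≤ norm2q q x + norm2q q h := by
    rw [norm2q, norm2q, norm2q]
    calc (∑ j, ‖xhat j‖ ^ q) ^ (1 / q)
        ≤ (∑ j, (‖x j‖ + ‖h j‖) ^ q) ^ (1 / q) := by
          refine Real.rpow_le_rpow (Finset.sum_nonneg fun j _ =>
            Real.rpow_nonneg (norm_nonneg _) q) (Finset.sum_le_sum fun j _ => ?_) (by positivity)
          refine Real.rpow_le_rpow (norm_nonneg _) ?_ (le_of_lt hq0)
          rw [hxhat j]; exact norm_add_le _ _
      _ ≤ (∑ j, ‖x j‖ ^ q) ^ (1 / q) + (∑ j, ‖h j‖ ^ q) ^ (1 / q) :=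
          Real.Lp_add_le_of_nonneg Finset.univ (le_of_lt hq) (fun j _ => norm_nonneg _)
            (fun j _ => norm_nonneg _)
  -- lower bound for ‖x̂‖₁
  have hlow : norm21 x - ∑ j ∈ S, ‖h j‖ + ∑ j ∈ Sᶜ, ‖h j‖ ≤ norm21 xhat := by
    have hsplit : norm21 xhat = ∑ j ∈ S, ‖xhat j‖ + ∑ j ∈ Sᶜ, ‖xhat j‖ :=
      (Finset.sum_add_sum_compl S _).symm
    rw [hsplit, h21x]
    have e1 : ∑ j ∈ S, ‖x j‖ - ∑ j ∈ S, ‖h j‖ ≤ ∑ j ∈ S, ‖xhat j‖ := by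
      rw [← Finset.sum_sub_distrib]
      refine Finset.sum_le_sum fun j _ => ?_
      rw [hxhat j]
      have := norm_add_le (x j + h j) (-h j)
      simp only [add_neg_cancel_right, norm_neg] at this
      linarith
    have e2 : ∑ j ∈ Sᶜ, ‖h j‖ ≤ ∑ j ∈ Sᶜ, ‖xhat j‖ := by
      refine Finset.sum_le_sum fun j hj => ?_
      rw [hxhat j, hxoff j (by simpa using (Finset.mem_compl.1 hj)), zero_add]
    linarith
  -- cone condition
  have hcone : norm21 h ≤ 3 * (k : ℝ) ^ r * norm2q q h := by
    have hsplit : norm21 h = ∑ j ∈ S, ‖h j‖ + ∑ j ∈ Sᶜ, ‖h j‖ :=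
      (Finset.sum_add_sum_compl S _).symm
    have key : norm21 x - ∑ j ∈ S, ‖h j‖ + ∑ j ∈ Sᶜ, ‖h j‖ ≤
        norm21 x + (k : ℝ) ^ r * norm2q q h := by
      refine le_trans hlow (le_trans hminx ?_)
      have e3 : (norm21 x / norm2q q x) * norm2q q xhat ≤
          (norm21 x / norm2q q x) * (norm2q q x + norm2q q h) :=
        mul_le_mul_of_nonneg_left hmink (div_nonneg (norm21_nonneg x) (le_of_lt hxq))
      have e4 : (norm21 x / norm2q q x) * (norm2q q x + norm2q q h) =
          norm21 x + (norm21 x / norm2q q x) * norm2q q h := by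
        rw [mul_add, div_mul_cancel₀ _ (ne_of_gt hxq)]
      have e5 : (norm21 x / norm2q q x) * norm2q q h ≤ (k : ℝ) ^ r * norm2q q h :=
        mul_le_mul_of_nonneg_right hα hhq0
      rw [e4] at e3
      linarith
    have key2 : ∑ j ∈ Sᶜ, ‖h j‖ ≤ ∑ j ∈ S, ‖h j‖ + (k : ℝ) ^ r * norm2q q h := by linarith
    rw [hsplit]
    calc ∑ j ∈ S, ‖h j‖ + ∑ j ∈ Sᶜ, ‖h j‖
        ≤ 2 * (∑ j ∈ S, ‖h j‖) + (k : ℝ) ^ r * norm2q q h := by linarith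
      _ ≤ 2 * ((k : ℝ) ^ r * norm2q q h) + (k : ℝ) ^ r * norm2q q h := by linarith [hhS]
      _ = 3 * (k : ℝ) ^ r * norm2q q h := by ring
  -- trivial case h = 0
  by_cases hhzero : h = 0
  · have e1 : norm21 h = 0 := by simp [hhzero, norm21]
    have e2 : norm2q q h = 0 := by rw [hhzero]; exact norm2q_zero_eq hq0'
    rw [hh] at e1 e2
    rw [e1, e2]
    constructor <;> positivity
  -- main case
  have hhq : 0 < norm2q q h := norm2q_pos hq0 hhzero
  -- kqs bound
  have hkqs : kqs q h ≤ (3 : ℝ) ^ (q / (q - 1)) * (k : ℝ) := by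
    rw [kqs]
    have hb : norm21 h / norm2q q h ≤ 3 * (k : ℝ) ^ r := by
      rw [div_le_iff₀ hhq]; linarith [hcone]
    have hbnn : 0 ≤ norm21 h / norm2q q h := div_nonneg (norm21_nonneg h) (le_of_lt hhq)
    calc (norm21 h / norm2q q h) ^ (q / (q - 1))
        ≤ (3 * (k : ℝ) ^ r) ^ (q / (q - 1)) :=
          Real.rpow_le_rpow hbnn hb (div_nonneg (le_of_lt hq0) (by linarith))
      _ = (3 : ℝ) ^ (q / (q - 1)) * ((k : ℝ) ^ r) ^ (q / (q - 1)) :=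
          Real.mul_rpow (by norm_num) hkr
      _ = (3 : ℝ) ^ (q / (q - 1)) * (k : ℝ) := by
          have hone : r * (q / (q - 1)) = 1 := by
            rw [hrdef]; field_simp
          have hkk : ((k : ℝ) ^ r) ^ (q / (q - 1)) = (k : ℝ) := by
            rw [← Real.rpow_mul (Nat.cast_nonneg k), hone, Real.rpow_one]
          rw [hkk]
  -- β ‖h‖_q ≤ ‖A h‖
  have hβh : β * norm2q q h ≤ ‖mulB A h‖ := by
    have hmem : ‖mulB A h‖ / norm2q q h ∈ {t : ℝ | ∃ z : Fin M → EuclideanSpace ℝ (Fin d),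
        z ≠ 0 ∧ kqs q z ≤ (3 : ℝ) ^ (q / (q - 1)) * (k : ℝ) ∧ t = ‖mulB A z‖ / norm2q q z} :=
      ⟨h, hhzero, hkqs, rfl⟩
    have hbdd : BddBelow {t : ℝ | ∃ z : Fin M → EuclideanSpace ℝ (Fin d),
        z ≠ 0 ∧ kqs q z ≤ (3 : ℝ) ^ (q / (q - 1)) * (k : ℝ) ∧ t = ‖mulB A z‖ / norm2q q z} := by
      refine ⟨0, ?_⟩
      rintro t ⟨z, _, _, rfl⟩
      exact div_nonneg (norm_nonneg _) (norm2q_nonneg q z)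
    have hle : β ≤ ‖mulB A h‖ / norm2q q h := by
      rw [hβ, bcmsv]; exact csInf_le hbdd hmem
    calc β * norm2q q h ≤ ‖mulB A h‖ / norm2q q h * norm2q q h :=
          mul_le_mul_of_nonneg_right hle hhq0
      _ = ‖mulB A h‖ := div_mul_cancel₀ _ (ne_of_gt hhq)
  -- ‖Aᵀ A h‖_{2,∞} ≤ 2 μ
  have hAtAh : ∀ j, ‖mulBt A (mulB A h) j‖ ≤ 2 * μ := by
    intro j
    have hAh : mulB A h = ε - (y - mulB A xhat) := by
      rw [hh, mulB_sub, hy]; abel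
    rw [hAh, mulBt_sub]
    have e1 : ‖(mulBt A ε - mulBt A (y - mulB A xhat)) j‖ ≤
        ‖mulBt A ε j‖ + ‖mulBt A (y - mulB A xhat) j‖ := by
      have : (mulBt A ε - mulBt A (y - mulB A xhat)) j =
          mulBt A ε j - mulBt A (y - mulB A xhat) j := rfl
      rw [this]; exact norm_sub_le _ _
    have e2 : ‖mulBt A ε j‖ ≤ μ := le_trans (le_norm2inf _ j) hε
    have e3 : ‖mulBt A (y - mulB A xhat) j‖ ≤ μ := le_trans (le_norm2inf _ j) hfeas
    linarith
  -- energy bound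
  have henergy : ‖mulB A h‖ ^ 2 ≤ 2 * μ * norm21 h := by
    rw [norm_mulB_sq]
    calc ∑ j, ∑ l, h j l * mulBt A (mulB A h) j l
        ≤ ∑ j, ‖h j‖ * ‖mulBt A (mulB A h) j‖ :=
          Finset.sum_le_sum fun j _ => inner_block _ _
      _ ≤ ∑ j, ‖h j‖ * (2 * μ) :=
          Finset.sum_le_sum fun j _ =>
            mul_le_mul_of_nonneg_left (hAtAh j) (norm_nonneg _)
      _ = 2 * μ * norm21 h := by rw [← Finset.sum_mul, norm21]; ring
  -- conclude
  have hstep : β ^ 2 * norm2q q h ≤ 6 * (k : ℝ) ^ r * μ := by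
    have e1 : (β * norm2q q h) ^ 2 ≤ ‖mulB A h‖ ^ 2 := by
      have hb0 : 0 ≤ β * norm2q q h := mul_nonneg (le_of_lt hbeta) hhq0
      exact pow_le_pow_left₀ hb0 hβh 2
    have e2 : ‖mulB A h‖ ^ 2 ≤ 2 * μ * (3 * (k : ℝ) ^ r * norm2q q h) := by
      refine le_trans henergy ?_
      exact mul_le_mul_of_nonneg_left hcone (by linarith)
    have e3 : (β ^ 2 * norm2q q h) * norm2q q h ≤ (6 * (k : ℝ) ^ r * μ) * norm2q q h := by
      calc (β ^ 2 * norm2q q h) * norm2q q h = (β * norm2q q h) ^ 2 := by ring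
        _ ≤ ‖mulB A h‖ ^ 2 := e1
        _ ≤ 2 * μ * (3 * (k : ℝ) ^ r * norm2q q h) := e2
        _ = (6 * (k : ℝ) ^ r * μ) * norm2q q h := by ring
    exact le_of_mul_le_mul_right e3 hhq
  have hq2 : norm2q q h ≤ 6 * (k : ℝ) ^ r * μ / β ^ 2 := by
    rw [le_div_iff₀ (by positivity)]
    linarith [hstep]
  constructor
  · exact hq2
  · calc norm21 h ≤ 3 * (k : ℝ) ^ r * norm2q q h := hcone
      _ ≤ 3 * (k : ℝ) ^ r * (6 * (k : ℝ) ^ r * μ / β ^ 2) :=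
          mul_le_mul_of_nonneg_left hq2 (by positivity)
      _ = 18 * ((k : ℝ) ^ r * (k : ℝ) ^ r) * μ / β ^ 2 := by ring
      _ = 18 * (k : ℝ) ^ (2 - 2 / q) * μ / β ^ 2 := by
          rw [← Real.rpow_add hkpos]
          congr 3
          rw [hrdef]; ring
end

section
/- Let x ∈ ℝ^N, S the block index set of the k blocks of x with largest ℓ2 norms, and h ∈ ℝ^N satisfy ‖x+h‖_{2,1}·‖x‖_{2,q} ≤ ‖x‖_{2,1}·‖x+h‖_{2,q} for some q ∈ (1,∞). Then ‖h‖_{2,1} ≤ (2k^{1−1/q} + k_q(x)^{1−1/q})‖h‖_{2,q} + 2‖x_{S^c}‖_{2,1}. -/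
/-- cone constraint for a general (compressible) signal. -/
theorem cone_constraint_compressible {M d k : ℕ} (q : ℝ) (hq : 1 < q)
    (S : Finset (Fin M)) (hS : S.card = k)
    (x h : Fin M → EuclideanSpace ℝ (Fin d)) (hx : x ≠ 0)
    (hlargest : ∀ i ∈ S, ∀ j ∉ S, ‖x j‖ ≤ ‖x i‖)
    (hineq : norm21 (x + h) * norm2q q x ≤ norm21 x * norm2q q (x + h)) :
    norm21 h ≤ (2 * (k : ℝ) ^ (1 - 1 / q) + (kqs q x) ^ (1 - 1 / q)) * norm2q q h
      + 2 * norm21 (restrictS Sᶜ x) := by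
  classical
  have hq0 : (0:ℝ) < q := lt_trans one_pos hq
  have hq0' : q ≠ 0 := ne_of_gt hq0
  have hqm1 : q - 1 ≠ 0 := sub_ne_zero.mpr hq.ne'
  obtain ⟨j0, hj0⟩ : ∃ j, x j ≠ 0 := by
    by_contra h'; push_neg at h'; exact hx (funext h')
  have hxq : 0 < norm2q q x := by
    have hsum : 0 < ∑ j, ‖x j‖ ^ q :=
      Finset.sum_pos' (fun j _ => Real.rpow_nonneg (norm_nonneg _) q)
        ⟨j0, Finset.mem_univ _, Real.rpow_pos_of_pos (norm_pos_iff.mpr hj0) q⟩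
    exact Real.rpow_pos_of_pos hsum _
  have h21x : 0 ≤ norm21 x := Finset.sum_nonneg fun j _ => norm_nonneg _
  have hBnn : 0 ≤ norm2q q h := Real.rpow_nonneg
    (Finset.sum_nonneg fun j _ => Real.rpow_nonneg (norm_nonneg _) q) _
  -- Minkowski
  have hmink : norm2q q (x + h) ≤ norm2q q x + norm2q q h := by
    unfold norm2q
    calc (∑ j, ‖(x + h) j‖ ^ q) ^ (1/q)
        ≤ (∑ j, |‖x j‖ + ‖h j‖| ^ q) ^ (1/q) := by
          apply Real.rpow_le_rpow
            (Finset.sum_nonneg fun j _ => Real.rpow_nonneg (norm_nonneg _) q)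
            (Finset.sum_le_sum fun j _ => Real.rpow_le_rpow (norm_nonneg _)
              (le_trans (by simpa using norm_add_le (x j) (h j)) (le_abs_self _)) hq0.le)
            (by positivity)
      _ ≤ (∑ j, |‖x j‖| ^ q) ^ (1/q) + (∑ j, |‖h j‖| ^ q) ^ (1/q) :=
          Real.Lp_add_le _ _ _ hq.le
      _ = (∑ j, ‖x j‖ ^ q) ^ (1/q) + (∑ j, ‖h j‖ ^ q) ^ (1/q) := by
          simp [abs_norm]
  have h1 : norm21 (x + h) * norm2q q x ≤ norm21 x * norm2q q x + norm21 x * norm2q q h :=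
    calc norm21 (x + h) * norm2q q x ≤ norm21 x * norm2q q (x + h) := hineq
      _ ≤ norm21 x * (norm2q q x + norm2q q h) := mul_le_mul_of_nonneg_left hmink h21x
      _ = _ := mul_add _ _ _
  have h1' : norm21 (x + h) ≤ norm21 x + (norm21 x / norm2q q x) * norm2q q h := by
    rw [← mul_le_mul_iff_left₀ hxq, add_mul, div_mul_eq_mul_div, div_mul_cancel₀ _ hxq.ne']
    exact h1
  -- splitting of norm21
  have hsplit : ∀ z : Fin M → EuclideanSpace ℝ (Fin d),
      norm21 z = ∑ j ∈ S, ‖z j‖ + ∑ j ∈ Sᶜ, ‖z j‖ :=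
    fun z => (Finset.sum_add_sum_compl S _).symm
  have hxc : norm21 (restrictS Sᶜ x) = ∑ j ∈ Sᶜ, ‖x j‖ := by
    unfold norm21 restrictS
    simp only [apply_ite norm, norm_zero]
    rw [Finset.sum_ite_mem, Finset.univ_inter]
  -- lower bound on norm21 (x+h)
  have h2 : (∑ j ∈ S, ‖x j‖ - ∑ j ∈ S, ‖h j‖) + (∑ j ∈ Sᶜ, ‖h j‖ - ∑ j ∈ Sᶜ, ‖x j‖)
      ≤ norm21 (x + h) := by
    rw [hsplit (x + h)]
    have hA : ∑ j ∈ S, ‖x j‖ - ∑ j ∈ S, ‖h j‖ ≤ ∑ j ∈ S, ‖(x + h) j‖ := by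
      rw [← Finset.sum_sub_distrib]
      refine Finset.sum_le_sum fun j _ => ?_
      simpa [sub_neg_eq_add] using norm_sub_norm_le (x j) (-(h j))
    have hB : ∑ j ∈ Sᶜ, ‖h j‖ - ∑ j ∈ Sᶜ, ‖x j‖ ≤ ∑ j ∈ Sᶜ, ‖(x + h) j‖ := by
      rw [← Finset.sum_sub_distrib]
      refine Finset.sum_le_sum fun j _ => ?_
      have := norm_sub_norm_le (h j) (-(x j))
      rw [sub_neg_eq_add, norm_neg] at this
      simpa [add_comm] using this
    exact add_le_add hA hB
  -- Hölder on S
  have hexp : 1 - 1/q = (q - 1)/q := by field_simp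
  have hp : Real.HolderConjugate (q/(q-1)) q :=
    (Real.HolderConjugate.conjExponent hq).symm
  have hhold : ∑ j ∈ S, ‖h j‖ ≤ (k : ℝ) ^ (1 - 1/q) * norm2q q h := by
    have H := Real.inner_le_Lp_mul_Lq_of_nonneg (s := S) (f := fun _ => (1:ℝ))
      (g := fun j => ‖h j‖) hp (fun i _ => zero_le_one) (fun i _ => norm_nonneg _)
    simp only [one_mul, Real.one_rpow, Finset.sum_const, nsmul_eq_mul, mul_one, hS] at H
    have h1p : 1/(q/(q-1)) = 1 - 1/q := by rw [one_div_div, hexp]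
    rw [h1p] at H
    refine le_trans H (mul_le_mul_of_nonneg_left ?_ (Real.rpow_nonneg (by positivity) _))
    unfold norm2q
    exact Real.rpow_le_rpow (Finset.sum_nonneg fun j _ => Real.rpow_nonneg (norm_nonneg _) q)
      (Finset.sum_le_sum_of_subset_of_nonneg (Finset.subset_univ S)
        (fun j _ _ => Real.rpow_nonneg (norm_nonneg _) q)) (by positivity)
  -- kqs identity
  have hone : q/(q-1) * (1 - 1/q) = 1 := by field_simp
  have hkqs : (kqs q x) ^ (1 - 1/q) = norm21 x / norm2q q x := by
    unfold kqs
    rw [← Real.rpow_mul (div_nonneg h21x hxq.le), hone, Real.rpow_one]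
  -- conclude
  have hexpand : (2 * (k:ℝ)^(1-1/q) + norm21 x / norm2q q x) * norm2q q h
      = 2 * ((k:ℝ)^(1-1/q) * norm2q q h) + (norm21 x / norm2q q x) * norm2q q h := by ring
  rw [hkqs, hsplit h, hxc, hexpand]
  have hx21 := hsplit x
  linarith [h1', h2, hhold, hx21]
end

section
/- For any nonzero z ∈ ℝ^N partitioned into M blocks and 1 < q₁ ≤ q₂ ≤ ∞, the block q-ratio sparsity is non-increasing in q: k_{q₂}(z) ≤ k_{q₁}(z). -/
/-- the block q-ratio sparsity is non-increasing in q (including q₂ = ∞). -/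
theorem kqs_antitone_in_q {M d : ℕ} (z : Fin M → EuclideanSpace ℝ (Fin d)) (hz : z ≠ 0)
    (q₁ q₂ : ℝ) (hq₁ : 1 < q₁) (hq : q₁ ≤ q₂) :
    kqs q₂ z ≤ kqs q₁ z ∧ norm21 z / norm2inf z ≤ kqs q₁ z := by
  classical
  obtain ⟨j₀, hj₀⟩ := Function.ne_iff.mp hz
  have haj₀ : 0 < ‖z j₀‖ := norm_pos_iff.mpr hj₀
  set a : Fin M → ℝ := fun j => ‖z j‖ with ha
  have ha0 : ∀ j, 0 ≤ a j := fun j => norm_nonneg _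
  set s : ℝ := ∑ j, a j with hs
  have hs0 : 0 < s := Finset.sum_pos' (fun j _ => ha0 j) ⟨j₀, Finset.mem_univ _, haj₀⟩
  set w : Fin M → ℝ := fun j => a j / s with hw
  have hw0 : ∀ j, 0 ≤ w j := fun j => div_nonneg (ha0 j) hs0.le
  have hwj₀ : 0 < w j₀ := div_pos haj₀ hs0
  have hwsum : ∑ j, w j = 1 := by
    simp only [hw, ← Finset.sum_div]
    rw [← hs, div_self hs0.ne']
  have hq₂ : 1 < q₂ := lt_of_lt_of_le hq₁ hq
  have hr₁ : (0 : ℝ) < q₁ - 1 := by linarith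
  have hr₂ : (0 : ℝ) < q₂ - 1 := by linarith
  -- the split identity w * w^(q-1) = w^q
  have hsplit : ∀ (j : Fin M) (q : ℝ), 1 < q → w j * w j ^ (q - 1) = w j ^ q := by
    intro j q hqq
    rcases eq_or_lt_of_le (hw0 j) with h | h
    · rw [← h, Real.zero_rpow (by linarith : q - 1 ≠ 0),
        Real.zero_rpow (by linarith : q ≠ 0), mul_zero]
    · calc w j * w j ^ (q - 1) = w j ^ (1 : ℝ) * w j ^ (q - 1) := by rw [Real.rpow_one]
        _ = w j ^ (1 + (q - 1)) := (Real.rpow_add h 1 (q - 1)).symm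
        _ = w j ^ q := by ring_nf
  -- positivity of P q
  have hPpos : ∀ q : ℝ, 0 < ∑ j, w j ^ q := by
    intro q
    exact Finset.sum_pos' (fun j _ => Real.rpow_nonneg (hw0 j) q)
      ⟨j₀, Finset.mem_univ _, Real.rpow_pos_of_pos hwj₀ q⟩
  -- the key formula: kqs q z = (∑ w^q) ^ (-(q-1)⁻¹)
  have hK : ∀ q : ℝ, 1 < q → kqs q z = (∑ j, w j ^ q) ^ (-(q - 1)⁻¹) := by
    intro q hqq
    have hq0 : (0 : ℝ) < q := by linarith
    have hqm1 : q - 1 ≠ 0 := by linarith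
    have hP := hPpos q
    have haw : ∀ j, a j = s * w j := by
      intro j; rw [hw]; field_simp
    have hsumaq : ∑ j, a j ^ q = s ^ q * ∑ j, w j ^ q := by
      rw [Finset.mul_sum]
      refine Finset.sum_congr rfl fun j _ => ?_
      rw [haw j, Real.mul_rpow hs0.le (hw0 j)]
    have hnorm2q : norm2q q z = s * (∑ j, w j ^ q) ^ (1 / q) := by
      rw [norm2q]
      rw [show (∑ j, ‖z j‖ ^ q) = ∑ j, a j ^ q from rfl, hsumaq,
        Real.mul_rpow (Real.rpow_nonneg hs0.le q) (Finset.sum_nonneg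
          fun j _ => Real.rpow_nonneg (hw0 j) q),
        ← Real.rpow_mul hs0.le, mul_one_div_cancel hq0.ne', Real.rpow_one]
    have hnorm21 : norm21 z = s := rfl
    rw [kqs, hnorm21, hnorm2q]
    have h1 : s / (s * (∑ j, w j ^ q) ^ (1 / q)) = (∑ j, w j ^ q) ^ (-(1 / q)) := by
      rw [Real.rpow_neg hP.le, div_mul_eq_div_div, div_self hs0.ne', one_div]
    rw [h1, ← Real.rpow_mul hP.le]
    congr 1
    field_simp
  -- Jensen's inequality step
  have hr : (1 : ℝ) ≤ (q₂ - 1) / (q₁ - 1) := (one_le_div hr₁).mpr (by linarith)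
  have hJ := Real.rpow_arith_mean_le_arith_mean_rpow Finset.univ w
    (fun j => w j ^ (q₁ - 1)) (fun i _ => hw0 i) hwsum
    (fun i _ => Real.rpow_nonneg (hw0 i) _) hr
  have hL : ∑ j, w j * w j ^ (q₁ - 1) = ∑ j, w j ^ q₁ :=
    Finset.sum_congr rfl fun j _ => hsplit j q₁ hq₁
  have hR : ∑ j, w j * (w j ^ (q₁ - 1)) ^ ((q₂ - 1) / (q₁ - 1)) = ∑ j, w j ^ q₂ := by
    refine Finset.sum_congr rfl fun j _ => ?_
    rw [← Real.rpow_mul (hw0 j),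
      show (q₁ - 1) * ((q₂ - 1) / (q₁ - 1)) = q₂ - 1 by field_simp,
      hsplit j q₂ hq₂]
  simp only [hL, hR] at hJ
  constructor
  · rw [hK q₁ hq₁, hK q₂ hq₂]
    calc (∑ j, w j ^ q₂) ^ (-(q₂ - 1)⁻¹)
        ≤ ((∑ j, w j ^ q₁) ^ ((q₂ - 1) / (q₁ - 1))) ^ (-(q₂ - 1)⁻¹) :=
          Real.rpow_le_rpow_of_nonpos (Real.rpow_pos_of_pos (hPpos q₁) _) hJ
            (neg_nonpos.mpr (inv_nonneg.mpr hr₂.le))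
      _ = (∑ j, w j ^ q₁) ^ (-(q₁ - 1)⁻¹) := by
          rw [← Real.rpow_mul (hPpos q₁).le]
          congr 1
          field_simp
  · have hne : Nonempty (Fin M) := ⟨j₀⟩
    have hbdd : BddAbove (Set.range a) := Set.Finite.bddAbove (Set.finite_range a)
    have ham : ∀ j, a j ≤ ⨆ i, a i := fun j => le_ciSup hbdd j
    have hm0 : 0 < ⨆ i, a i := lt_of_lt_of_le haj₀ (ham j₀)
    have hn2i : norm2inf z = ⨆ i, a i := rfl
    have hn21 : norm21 z = s := rfl
    have hu0 : 0 < (⨆ i, a i) / s := div_pos hm0 hs0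
    have hwu : ∀ j, w j ≤ (⨆ i, a i) / s := fun j =>
      (div_le_div_iff_of_pos_right hs0).mpr (ham j)
    have hP1u : (∑ j, w j ^ q₁) ≤ ((⨆ i, a i) / s) ^ (q₁ - 1) := by
      calc ∑ j, w j ^ q₁ = ∑ j, w j * w j ^ (q₁ - 1) := hL.symm
        _ ≤ ∑ j, w j * ((⨆ i, a i) / s) ^ (q₁ - 1) :=
            Finset.sum_le_sum fun j _ => mul_le_mul_of_nonneg_left
              (Real.rpow_le_rpow (hw0 j) (hwu j) hr₁.le) (hw0 j)
        _ = ((⨆ i, a i) / s) ^ (q₁ - 1) := by rw [← Finset.sum_mul, hwsum, one_mul]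
    rw [hK q₁ hq₁, hn2i, hn21]
    have h2 : s / (⨆ i, a i) = ((⨆ i, a i) / s) ^ (-1 : ℝ) := by
      rw [Real.rpow_neg hu0.le, Real.rpow_one, inv_div]
    rw [h2]
    calc ((⨆ i, a i) / s) ^ (-1 : ℝ)
        = (((⨆ i, a i) / s) ^ (q₁ - 1)) ^ (-(q₁ - 1)⁻¹) := by
          rw [← Real.rpow_mul hu0.le]
          congr 1
          field_simp
      _ ≤ (∑ j, w j ^ q₁) ^ (-(q₁ - 1)⁻¹) :=
          Real.rpow_le_rpow_of_nonpos (hPpos q₁) hP1u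
            (neg_nonpos.mpr (inv_nonneg.mpr hr₁.le))
end
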